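/- Let A be an n×m matrix defining a zero-sum game with value v, first column c_1 = v·1_n, and let v_{-1} be the value of the game A_{-1} (first column removed). If v_{-1} > v, then the unique equilibrium strategy of Player 2 is the pure strategy e_1: i.e., every y* ∈ S_m with max_{j∈[n]} (r_j)^T y* = v (where r_j are the rows of A) satisfies y* = e_1. -/

import Mathlib

/-!
Split an optimal strategy `y` of Player 2 as `y = α e₁ + (1 - α) ȳ` with `ȳ` a strategy of the
reduced game. Since the first column is constant `v`, every row pays `v α + (1 - α)` times its
reduced payoff against `ȳ`, so `v = max_j (r_j)ᵀ y ≥ v α + (1 - α) v₋₁`. As `v₋₁ > v`, this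
forces `α = 1`, i.e. `y = e₁`.
-/

/-- Payoff of Player 2's mixed strategy `y` against Player 1's pure action `j`
(the `j`-th row of `A` dotted with `y`). -/
noncomputable def rowPay {n m : ℕ} (A : Matrix (Fin n) (Fin m) ℝ) (j : Fin n)
    (y : Fin m → ℝ) : ℝ := ∑ i, A j i * y i

/-- `max_j (r_j)^T y`. -/
noncomputable def maxPay {n m : ℕ} (A : Matrix (Fin (n + 1)) (Fin m) ℝ)
    (y : Fin m → ℝ) : ℝ :=
  Finset.univ.sup' Finset.univ_nonempty fun j => rowPay A j y

/-- `max_j (r_j)_{-1}^T ȳ` in the reduced game with the first column deleted. -/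
noncomputable def maxPayRed {n m : ℕ} (A : Matrix (Fin (n + 1)) (Fin (m + 2)) ℝ)
    (y : Fin (m + 1) → ℝ) : ℝ :=
  Finset.univ.sup' Finset.univ_nonempty fun j => ∑ i : Fin (m + 1), A j i.succ * y i

theorem eq_single_of_mem_stdSimplex_of_apply_eq_one {𝕜 ι : Type*} [Field 𝕜] [LinearOrder 𝕜]
    [IsStrictOrderedRing 𝕜] [Fintype ι] [DecidableEq ι] {y : ι → 𝕜}
    (hy : y ∈ stdSimplex 𝕜 ι) {i : ι} (hi : y i = 1) : y = Pi.single i 1 := by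
  have hrest : ∑ k ∈ Finset.univ.erase i, y k = 0 := by
    have := Finset.add_sum_erase Finset.univ y (Finset.mem_univ i)
    rw [hy.2, hi] at this
    linarith
  funext k
  by_cases hk : k = i
  · subst hk; simp [hi]
  · rw [Pi.single_eq_of_ne hk]
    exact (Finset.sum_eq_zero_iff_of_nonneg fun k _ => hy.1 k).1 hrest k
      (Finset.mem_erase.2 ⟨hk, Finset.mem_univ k⟩)

/-- The strategy `y` conditioned on not playing the first column. -/
noncomputable def condTail {k : ℕ} (y : Fin (k + 1) → ℝ) : Fin k → ℝ :=
  fun i => y i.succ / (1 - y 0)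

theorem condTail_mem_stdSimplex {k : ℕ} {y : Fin (k + 1) → ℝ}
    (hy : y ∈ stdSimplex ℝ (Fin (k + 1))) (h0 : y 0 < 1) :
    condTail y ∈ stdSimplex ℝ (Fin k) := by
  have htail : ∑ i : Fin k, y i.succ = 1 - y 0 := by
    have := Fin.sum_univ_succ y
    rw [hy.2] at this
    linarith
  refine ⟨fun i => div_nonneg (hy.1 i.succ) (sub_pos.2 h0).le, ?_⟩
  simp only [condTail]
  rw [← Finset.sum_div, htail, div_self (sub_pos.2 h0).ne']

theorem rowPay_eq_of_apply_zero {n k : ℕ} {A : Matrix (Fin n) (Fin (k + 1)) ℝ} {c : ℝ}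
    {j : Fin n} (hc : A j 0 = c) {y : Fin (k + 1) → ℝ} (h0 : y 0 < 1) :
    rowPay A j y = c * y 0 + (1 - y 0) * ∑ i : Fin k, A j i.succ * condTail y i := by
  have hpos : 1 - y 0 ≠ 0 := (sub_pos.2 h0).ne'
  rw [rowPay, Fin.sum_univ_succ, hc, Finset.mul_sum]
  congr 1
  refine Finset.sum_congr rfl fun i _ => ?_
  simp only [condTail]
  field_simp

theorem mul_add_mul_maxPayRed_le_maxPay {n m : ℕ} {A : Matrix (Fin (n + 1)) (Fin (m + 2)) ℝ}
    {c : ℝ} (hc : ∀ j, A j 0 = c) {y : Fin (m + 2) → ℝ} (h0 : y 0 < 1) :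
    c * y 0 + (1 - y 0) * maxPayRed A (condTail y) ≤ maxPay A y := by
  obtain ⟨j, -, hj⟩ := Finset.exists_mem_eq_sup' Finset.univ_nonempty
    fun j => ∑ i : Fin (m + 1), A j i.succ * condTail y i
  rw [maxPayRed, hj, ← rowPay_eq_of_apply_zero (hc j) h0]
  exact Finset.le_sup' (fun j => rowPay A j y) (Finset.mem_univ j)

theorem stmt6_general {n m : ℕ} (A : Matrix (Fin (n + 1)) (Fin (m + 2)) ℝ) (v vneg1 : ℝ)
    -- the first column is v·1_n, where v is the value of A
    (hc1 : ∀ j, A j 0 = v)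
    -- vneg1 is the value of the reduced game A_{-1}
    (hlb1 : ∀ y ∈ stdSimplex ℝ (Fin (m + 1)), vneg1 ≤ maxPayRed A y)
    (hlt : v < vneg1) :
    ∀ ystar ∈ stdSimplex ℝ (Fin (m + 2)), maxPay A ystar = v →
      ystar = Pi.single (0 : Fin (m + 2)) (1 : ℝ) := by
  intro ystar hy hmax
  refine eq_single_of_mem_stdSimplex_of_apply_eq_one hy ?_
  by_contra hne
  have hlt1 : ystar 0 < 1 := lt_of_le_of_ne (mem_Icc_of_mem_stdSimplex hy 0).2 hne
  have hsplit := mul_add_mul_maxPayRed_le_maxPay hc1 hlt1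
  have hred := hlb1 _ (condTail_mem_stdSimplex hy hlt1)
  rw [hmax] at hsplit
  nlinarith

theorem stmt6 {n m : ℕ} (A : Matrix (Fin (n + 1)) (Fin (m + 2)) ℝ) (v vneg1 : ℝ)
    -- the first column is v·1_n, where v is the value of A
    (hc1 : ∀ j, A j 0 = v)
    (hlb : ∀ y ∈ stdSimplex ℝ (Fin (m + 2)), v ≤ maxPay A y)
    (hach : ∃ y ∈ stdSimplex ℝ (Fin (m + 2)), maxPay A y = v)
    -- vneg1 is the value of the reduced game A_{-1}
    (hlb1 : ∀ y ∈ stdSimplex ℝ (Fin (m + 1)), vneg1 ≤ maxPayRed A y)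
    (hach1 : ∃ y ∈ stdSimplex ℝ (Fin (m + 1)), maxPayRed A y = vneg1)
    (hlt : v < vneg1) :
    ∀ ystar ∈ stdSimplex ℝ (Fin (m + 2)), maxPay A ystar = v →
      ystar = Pi.single (0 : Fin (m + 2)) (1 : ℝ) :=
  stmt6_general A v vneg1 hc1 hlb1 hlt
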